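/- Replacement for evaluation contexts: suppose D is a derivation of Γ ⊢ ℰ[M] : A ⟨S ▸ T⟩ @ C, and D' is the subderivation at the position of the hole concluding Γ ⊢ M : B ⟨S ▸ T'⟩ @ C. If Γ ⊢ N : B ⟨S' ▸ T'⟩ @ C for some session type S', then Γ ⊢ ℰ[N] : A ⟨S' ▸ T⟩ @ C. -/

import Mathlib

/- The Maty core calculus: a fine-grain call-by-value actor language with
multiparty session types enforced by a flow-sensitive effect system.
Type environments are lists of types, with variables represented as de Bruijn
levels (a context `Γ, x : A` is `Γ ++ [A]`, and the fresh variable `x` is the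
level `Γ.length`); hence weakening adds an entry at the end, and substitution
for the last-bound variable needs no shifting. -/

abbrev Role := ℕ
abbrev Label := ℕ

mutual
/-- Types: base types, effect-annotated function types `A →⟨S ▸ T⟩@C B`,
products, access point types, and handler types. -/
inductive MTy : Type where
  | unit : MTy
  | bool : MTy
  | int : MTy
  | fn (A B : MTy) (S T : STy) (C : MTy)
  | prod (A B : MTy)
  | ap (roles : List Role) (proto : Role → STy)
  | handler (Sin : STy) (C : MTy)

/-- Local session types with full payload types. -/
inductive STy : Type where
  | select (q : Role) (dom : Label → Bool) (pay : Label → MTy) (cont : Label → STy)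
  | branch (q : Role) (dom : Label → Bool) (pay : Label → MTy) (cont : Label → STy)
  | mu (S : STy)
  | var (n : ℕ)
  | endS
end

/-- Substitution of recursion variables (payload types are closed and are left
unchanged). -/
def STy.subst : STy → ℕ → STy → STy
  | .select q d p c, k, T => .select q d p (fun l => (c l).subst k T)
  | .branch q d p c, k, T => .branch q d p (fun l => (c l).subst k T)
  | .mu S, k, T => .mu (S.subst (k+1) T)
  | .var n, k, T => if n = k then T else .var n
  | .endS, _, _ => .endS

def STy.unfold : STy → STy
  | .mu S => S.subst 0 (.mu S)
  | S => S

structure QEntry where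
  sender : Role
  receiver : Role
  label : Label
  payload : MTy

abbrev Queue := List QEntry

inductive QSwap : Queue → Queue → Prop
  | swap (Q₁ Q₂ : Queue) (e₁ e₂ : QEntry)
      (h : e₁.sender ≠ e₂.sender ∨ e₁.receiver ≠ e₂.receiver) :
      QSwap (Q₁ ++ e₁ :: e₂ :: Q₂) (Q₁ ++ e₂ :: e₁ :: Q₂)

def QCong : Queue → Queue → Prop := Relation.EqvGen QSwap

abbrev SName := ℕ

inductive EnvEntry : Type where
  | ep (s : SName) (p : Role) (S : STy)
  | qu (s : SName) (Q : Queue)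

abbrev Env := Multiset EnvEntry

inductive EntryCong : EnvEntry → EnvEntry → Prop
  | ep {s p S} : EntryCong (.ep s p S) (.ep s p S)
  | qu {s Q Q'} : QCong Q Q' → EntryCong (.qu s Q) (.qu s Q')

def EnvCong : Env → Env → Prop := Multiset.Rel EntryCong

inductive EStep : Env → Env → Prop
  | send (Δ : Env) (s : SName) (p q : Role) (ℓ : Label)
      (d : Label → Bool) (pay : Label → MTy) (cont : Label → STy) (Q : Queue)
      (h : d ℓ = true) :
      EStep (EnvEntry.ep s p (.select q d pay cont) ::ₘ EnvEntry.qu s Q ::ₘ Δ)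
            (EnvEntry.ep s p (cont ℓ) ::ₘ EnvEntry.qu s (Q ++ [⟨p, q, ℓ, pay ℓ⟩]) ::ₘ Δ)
  | recv (Δ : Env) (s : SName) (p q : Role) (ℓ : Label)
      (d : Label → Bool) (pay : Label → MTy) (cont : Label → STy) (Q : Queue)
      (h : d ℓ = true) :
      EStep (EnvEntry.ep s p (.branch q d pay cont) ::ₘ
               EnvEntry.qu s (⟨q, p, ℓ, pay ℓ⟩ :: Q) ::ₘ Δ)
            (EnvEntry.ep s p (cont ℓ) ::ₘ EnvEntry.qu s Q ::ₘ Δ)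
  | done (Δ : Env) (s : SName) (p : Role) :
      EStep (EnvEntry.ep s p .endS ::ₘ Δ) Δ
  | unfold (Δ Δ' : Env) (s : SName) (p : Role) (S : STy)
      (h : EStep (EnvEntry.ep s p (STy.mu S).unfold ::ₘ Δ) Δ') :
      EStep (EnvEntry.ep s p (.mu S) ::ₘ Δ) Δ'

def ERed (Δ Δ' : Env) : Prop :=
  ∃ Δ₁ Δ₂, EnvCong Δ Δ₁ ∧ EStep Δ₁ Δ₂ ∧ EnvCong Δ₂ Δ'

def HeadSafe (Δ : Env) : Prop :=
  ∀ (s : SName) (p q : Role) (d : Label → Bool) (pay : Label → MTy)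
      (cont : Label → STy) (Q : Queue),
    EnvEntry.ep s p (.branch q d pay cont) ∈ Δ →
    EnvEntry.qu s Q ∈ Δ →
    ∀ (ℓ : Label) (B : MTy) (Q' : Queue), QCong Q (⟨q, p, ℓ, B⟩ :: Q') →
      d ℓ = true ∧ B = pay ℓ

def IsSafetyProp (φ : Env → Prop) : Prop :=
  ∀ Δ, φ Δ →
    HeadSafe Δ ∧
    (∀ (Δ' : Env) (s : SName) (p : Role) (S : STy),
        Δ = EnvEntry.ep s p (.mu S) ::ₘ Δ' →
        φ (EnvEntry.ep s p (STy.mu S).unfold ::ₘ Δ')) ∧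
    (∀ Δ', ERed Δ Δ' → φ Δ')

def EnvSafe (Δ : Env) : Prop := ∃ φ, IsSafetyProp φ ∧ φ Δ

def DeadlockFree (Δ : Env) : Prop :=
  ∀ Δ', Relation.ReflTransGen ERed Δ Δ' → (∀ Δ'', ¬ ERed Δ' Δ'') →
    ∃ s, Δ' = {EnvEntry.qu s []}

def Compliant (Δ : Env) : Prop := EnvSafe Δ ∧ DeadlockFree Δ

/-- The runtime type environment of a protocol `(roles, proto)`: one endpoint
per role together with an empty queue, for an arbitrary session name. -/
def protocolEnv (roles : List Role) (proto : Role → STy) : Env :=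
  EnvEntry.qu 0 [] ::ₘ ↑(roles.map fun p => EnvEntry.ep 0 p (proto p))

/- ------------------------------------------------------------------ -/
/- Terms -/

mutual
/-- Values. -/
inductive Val : Type where
  | var (n : ℕ)
  | lam (M : Comp)
  | recF (M : Comp)
  | unitV
  | boolV (b : Bool)
  | intV (n : ℤ)
  | pair (V W : Val)
  | handler (q : Role) (h : Label → Comp)

/-- Computations. -/
inductive Comp : Type where
  | letc (M : Comp) (N : Comp)
  | ret (V : Val)
  | app (V W : Val)
  | ite (V : Val) (M N : Comp)
  | letPair (V : Val) (M : Comp)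
  | spawn (M : Comp)
  | send (q : Role) (ℓ : Label) (V : Val)
  | suspend (V W : Val)
  | newAP (roles : List Role) (proto : Role → STy)
  | register (V : Val) (p : Role) (W : Val)
end

mutual
/-- Substitution of a value for the de Bruijn level `k` (no shifting needed
with levels). -/
def substV (k : ℕ) (U : Val) : Val → Val
  | .var n => if n = k then U else .var n
  | .lam M => .lam (substC k U M)
  | .recF M => .recF (substC k U M)
  | .unitV => .unitV
  | .boolV b => .boolV b
  | .intV n => .intV n
  | .pair V W => .pair (substV k U V) (substV k U W)
  | .handler q h => .handler q (fun ℓ => substC k U (h ℓ))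

def substC (k : ℕ) (U : Val) : Comp → Comp
  | .letc M N => .letc (substC k U M) (substC k U N)
  | .ret V => .ret (substV k U V)
  | .app V W => .app (substV k U V) (substV k U W)
  | .ite V M N => .ite (substV k U V) (substC k U M) (substC k U N)
  | .letPair V M => .letPair (substV k U V) (substC k U M)
  | .spawn M => .spawn (substC k U M)
  | .send q ℓ V => .send q ℓ (substV k U V)
  | .suspend V W => .suspend (substV k U V) (substV k U W)
  | .newAP roles proto => .newAP roles proto
  | .register V p W => .register (substV k U V) p (substV k U W)
end

/-- Type environments (contexts): `Γ, x : A` is `Γ ++ [A]`. -/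
abbrev TCtx := List MTy

mutual
/-- Value typing `Γ ⊢ V : A`. -/
inductive ValTy : TCtx → Val → MTy → Prop where
  | var {Γ n A} : Γ[n]? = some A → ValTy Γ (.var n) A
  | unit {Γ} : ValTy Γ .unitV .unit
  | bool {Γ b} : ValTy Γ (.boolV b) .bool
  | int {Γ n} : ValTy Γ (.intV n) .int
  | lam {Γ A B C S T M} : CompTy (Γ ++ [A]) C S M B T →
      ValTy Γ (.lam M) (.fn A B S T C)
  | recF {Γ A B C S T M} : CompTy (Γ ++ [A, .fn A B S T C]) C S M B T →
      ValTy Γ (.recF M) (.fn A B S T C)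
  | pair {Γ V W A B} : ValTy Γ V A → ValTy Γ W B → ValTy Γ (.pair V W) (.prod A B)
  | handler {Γ C q d pay cont h} :
      (∀ ℓ, d ℓ = true → CompTy (Γ ++ [pay ℓ, C]) C (cont ℓ) (h ℓ) C .endS) →
      ValTy Γ (.handler q h) (.handler (.branch q d pay cont) C)

/-- Computation typing `Γ ⊢ M : A ⟨S ▸ T⟩ @ C` (session precondition `S`,
postcondition `T`, actor state type `C`). -/
inductive CompTy : TCtx → MTy → STy → Comp → MTy → STy → Prop where
  | letc {Γ C S₁ S₂ S₃ M N A B} : CompTy Γ C S₁ M A S₂ →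
      CompTy (Γ ++ [A]) C S₂ N B S₃ → CompTy Γ C S₁ (.letc M N) B S₃
  | ret {Γ C S V A} : ValTy Γ V A → CompTy Γ C S (.ret V) A S
  | app {Γ C S T V W A B} : ValTy Γ V (.fn A B S T C) → ValTy Γ W A →
      CompTy Γ C S (.app V W) B T
  | ite {Γ C S₁ S₂ V M N A} : ValTy Γ V .bool → CompTy Γ C S₁ M A S₂ →
      CompTy Γ C S₁ N A S₂ → CompTy Γ C S₁ (.ite V M N) A S₂
  | letPair {Γ C S₁ S₂ V M A₁ A₂ B} : ValTy Γ V (.prod A₁ A₂) →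
      CompTy (Γ ++ [A₁, A₂]) C S₁ M B S₂ → CompTy Γ C S₁ (.letPair V M) B S₂
  | spawn {Γ C S M A} : CompTy Γ A .endS M A .endS →
      CompTy Γ C S (.spawn M) .unit S
  | send {Γ C q ℓ d pay cont V} : d ℓ = true → ValTy Γ V (pay ℓ) →
      CompTy Γ C (.select q d pay cont) (.send q ℓ V) .unit (cont ℓ)
  | suspend {Γ C q d pay cont V W A S'} :
      ValTy Γ V (.handler (.branch q d pay cont) C) → ValTy Γ W C →
      CompTy Γ C (.branch q d pay cont) (.suspend V W) A S'
  | newAP {Γ C S roles proto} : Compliant (protocolEnv roles proto) →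
      CompTy Γ C S (.newAP roles proto) (.ap roles proto) S
  | register {Γ A S roles proto p V W} : ValTy Γ V (.ap roles proto) →
      p ∈ roles → ValTy Γ W (.fn A A (proto p) .endS A) →
      CompTy Γ A S (.register V p W) .unit S
end

/-- Term reduction (β-reduction), at ambient de Bruijn level `n` (the length of
the typing context): fine-grain call-by-value, closed under the `let`
evaluation context. -/
inductive TStep (n : ℕ) : Comp → Comp → Prop where
  | letRet {V M} : TStep n (.letc (.ret V) M) (substC n V M)
  | beta {M V} : TStep n (.app (.lam M) V) (substC n V M)
  | recBeta {M V} :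
      TStep n (.app (.recF M) V) (substC n V (substC (n+1) (.recF M) M))
  | iteT {M N} : TStep n (.ite (.boolV true) M N) M
  | iteF {M N} : TStep n (.ite (.boolV false) M N) N
  | letPair {V W M} :
      TStep n (.letPair (.pair V W) M) (substC n V (substC (n+1) W M))
  | ctx {M M' K} : TStep n M M' → TStep n (.letc M K) (.letc M' K)

/-- Evaluation contexts `ℰ ::= [ ] | let x ⇐ ℰ in M`. -/
inductive ECtx : Type where
  | hole
  | letc (E : ECtx) (N : Comp)

def ECtx.plug : ECtx → Comp → Comp
  | .hole, M => M
  | .letc E N, M => .letc (E.plug M) N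

/-- Typing of evaluation contexts: `CtxTy Γ C B T' E A T` says that a
derivation for `E[M]` (of type `A`, postcondition `T`) contains at the hole
position a derivation for `M` of type `B` with postcondition `T'`; the hole is
in head position, so the precondition at the hole equals the outer one. -/
inductive CtxTy (Γ : TCtx) (C : MTy) (B : MTy) (T' : STy) : ECtx → MTy → STy → Prop where
  | hole : CtxTy Γ C B T' .hole B T'
  | letc {E K A₁ S₂ A S₃} : CtxTy Γ C B T' E A₁ S₂ →
      CompTy (Γ ++ [A₁]) C S₂ K A S₃ → CtxTy Γ C B T' (.letc E K) A S₃

theorem CtxTy.compTy_plug {Γ : TCtx} {C B A : MTy} {S' T T' : STy} {E : ECtx} {N : Comp}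
    (hE : CtxTy Γ C B T' E A T) (hN : CompTy Γ C S' N B T') :
    CompTy Γ C S' (E.plug N) A T := by
  induction hE with
  | hole => exact hN
  | letc _ hK ih => exact .letc ih hK

/-- replacement.  If `ℰ[M]` is typable, the subderivation at the
hole concludes `Γ ⊢ M : B ⟨S ▸ T'⟩ @ C` (recorded by `CtxTy`, which captures
the hole position in the derivation), and `Γ ⊢ N : B ⟨S' ▸ T'⟩ @ C`, then
`Γ ⊢ ℰ[N] : A ⟨S' ▸ T⟩ @ C`. -/
theorem replacement (Γ : TCtx) (C : MTy) (E : ECtx) (M N : Comp)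
    (A B : MTy) (S S' T T' : STy)
    (hD : CompTy Γ C S (E.plug M) A T)
    (hpos : CtxTy Γ C B T' E A T)
    (hM : CompTy Γ C S M B T')
    (hN : CompTy Γ C S' N B T') :
    CompTy Γ C S' (E.plug N) A T :=
  hpos.compTy_plug hN
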